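/- For a triangle T in ℝ² with vertices q_i, q_j, q_k, the piecewise-linear (barycentric) basis functions φ_i, φ_j satisfy ∇φ_i · ∇φ_j = -cot(θ_k)/(2|T|) on T, where θ_k is the interior angle at the vertex q_k opposite the edge connecting q_i and q_j, and |T| is the area of T. -/

import Mathlib

/-! With `x = qᵢ - qₖ` and `y = qⱼ - qₖ`, the gradients `∇φᵢ, ∇φⱼ` form the basis of `ℝ²` dual to
`x, y`, so they are the quarter-turns of `y` and `-x` divided by `D = det (x, y)`. Hence
`∇φᵢ · ∇φⱼ = -(x · y) / D²`, while `x · y = |x| |y| cos θₖ`, `|D| = |x| |y| sin θₖ` and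
`|D| = 2 |T|`. -/

open EuclideanGeometry InnerProductGeometry

def det2 (u v : EuclideanSpace ℝ (Fin 2)) : ℝ := u 0 * v 1 - u 1 * v 0

theorem inner_eq_fin_two (u v : EuclideanSpace ℝ (Fin 2)) :
    inner ℝ u v = u 0 * v 0 + u 1 * v 1 := by
  simp [PiLp.inner_apply, Fin.sum_univ_two, mul_comm]

theorem det2_mul_det2 (g h u v : EuclideanSpace ℝ (Fin 2)) :
    det2 g h * det2 u v = inner ℝ g u * inner ℝ h v - inner ℝ g v * inner ℝ h u := by
  simp only [inner_eq_fin_two, det2]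
  ring

theorem inner_self_mul_inner_self_sub_sq (u v : EuclideanSpace ℝ (Fin 2)) :
    inner ℝ u u * inner ℝ v v - inner ℝ u v * inner ℝ u v = det2 u v ^ 2 := by
  simp only [inner_eq_fin_two, det2]
  ring

theorem sin_angle_mul_norm_mul_norm_eq_abs_det2 (u v : EuclideanSpace ℝ (Fin 2)) :
    Real.sin (angle u v) * (‖u‖ * ‖v‖) = |det2 u v| := by
  rw [sin_angle_mul_norm_mul_norm, inner_self_mul_inner_self_sub_sq, Real.sqrt_sq_eq_abs]

theorem cos_angle_div_sin_angle (u v : EuclideanSpace ℝ (Fin 2)) :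
    Real.cos (angle u v) / Real.sin (angle u v) = inner ℝ u v / |det2 u v| := by
  rcases eq_or_ne (‖u‖ * ‖v‖) 0 with h | h
  · rcases mul_eq_zero.1 h with hu | hv
    · simp [norm_eq_zero.1 hu]
    · simp [norm_eq_zero.1 hv]
  · rw [← cos_angle_mul_norm_mul_norm, ← sin_angle_mul_norm_mul_norm_eq_abs_det2,
      mul_div_mul_right _ _ h]

theorem inner_eq_of_dual_basis {g h u v : EuclideanSpace ℝ (Fin 2)}
    (hgu : inner ℝ g u = 1) (hgv : inner ℝ g v = 0) (hhu : inner ℝ h u = 0)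
    (hhv : inner ℝ h v = 1) :
    inner ℝ g h = -inner ℝ u v / det2 u v ^ 2 := by
  have hdet : det2 g h * det2 u v = 1 := by simp [det2_mul_det2, hgu, hgv, hhu, hhv]
  have hD : det2 u v ≠ 0 := right_ne_zero_of_mul_eq_one hdet
  rw [inner_eq_fin_two] at hgu hgv hhu hhv
  have hg0 : g 0 * det2 u v = v 1 := by rw [det2]; linear_combination v 1 * hgu - u 1 * hgv
  have hg1 : g 1 * det2 u v = -v 0 := by rw [det2]; linear_combination -v 0 * hgu + u 0 * hgv
  have hh0 : h 0 * det2 u v = -u 1 := by rw [det2]; linear_combination -u 1 * hhv + v 1 * hhu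
  have hh1 : h 1 * det2 u v = u 0 := by rw [det2]; linear_combination u 0 * hhv - v 0 * hhu
  rw [eq_div_iff (pow_ne_zero 2 hD), inner_eq_fin_two, inner_eq_fin_two]
  linear_combination (h 0 * det2 u v) * hg0 + (h 1 * det2 u v) * hg1 + v 1 * hh0 - v 0 * hh1

theorem det2_sub_sub_cyclic (p q r : EuclideanSpace ℝ (Fin 2)) :
    det2 (q - p) (r - p) = det2 (p - r) (q - r) := by
  simp only [det2, PiLp.sub_apply]
  ring

theorem grad_dot_eq_neg_cot_general {qi qj qk : EuclideanSpace ℝ (Fin 2)}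
    (gi gj : EuclideanSpace ℝ (Fin 2)) (ci cj : ℝ)
    (hii : inner ℝ gi qi + ci = (1 : ℝ)) (hij : inner ℝ gi qj + ci = (0 : ℝ))
    (hik : inner ℝ gi qk + ci = (0 : ℝ))
    (hji : inner ℝ gj qi + cj = (0 : ℝ)) (hjj : inner ℝ gj qj + cj = (1 : ℝ))
    (hjk : inner ℝ gj qk + cj = (0 : ℝ))
    (area : ℝ)
    (harea : area = |(qj - qi) 0 * (qk - qi) 1 - (qj - qi) 1 * (qk - qi) 0| / 2)
    (θ : ℝ) (hθ : θ = ∠ qi qk qj) :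
    (inner ℝ gi gj : ℝ) = -(Real.cos θ / Real.sin θ) / (2 * area) := by
  have hgrad : inner ℝ gi gj = -inner ℝ (qi - qk) (qj - qk) / det2 (qi - qk) (qj - qk) ^ 2 :=
    inner_eq_of_dual_basis (by rw [inner_sub_right]; linarith) (by rw [inner_sub_right]; linarith)
      (by rw [inner_sub_right]; linarith) (by rw [inner_sub_right]; linarith)
  have hcot : Real.cos θ / Real.sin θ =
      inner ℝ (qi - qk) (qj - qk) / |det2 (qi - qk) (qj - qk)| := by
    rw [hθ, EuclideanGeometry.angle, vsub_eq_sub, vsub_eq_sub, cos_angle_div_sin_angle]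
  have harea' : 2 * area = |det2 (qi - qk) (qj - qk)| := by
    rw [harea, ← det2_sub_sub_cyclic]
    exact mul_div_cancel₀ _ two_ne_zero
  rw [hgrad, hcot, harea', ← neg_div, div_div, abs_mul_abs_self, sq]

theorem grad_dot_eq_neg_cot {qi qj qk : EuclideanSpace ℝ (Fin 2)}
    (hT : AffineIndependent ℝ ![qi, qj, qk])
    (gi gj : EuclideanSpace ℝ (Fin 2)) (ci cj : ℝ)
    (hii : inner ℝ gi qi + ci = (1 : ℝ)) (hij : inner ℝ gi qj + ci = (0 : ℝ))
    (hik : inner ℝ gi qk + ci = (0 : ℝ))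
    (hji : inner ℝ gj qi + cj = (0 : ℝ)) (hjj : inner ℝ gj qj + cj = (1 : ℝ))
    (hjk : inner ℝ gj qk + cj = (0 : ℝ))
    (area : ℝ)
    (harea : area = |(qj - qi) 0 * (qk - qi) 1 - (qj - qi) 1 * (qk - qi) 0| / 2)
    (θ : ℝ) (hθ : θ = ∠ qi qk qj) :
    (inner ℝ gi gj : ℝ) = -(Real.cos θ / Real.sin θ) / (2 * area) :=
  grad_dot_eq_neg_cot_general gi gj ci cj hii hij hik hji hjj hjk area harea θ hθ
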